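/- arXiv:1412.2326 — 3 statements merged into one kernel-verified Lean document; each statement's English description precedes it below -/
import Mathlib

section
/- If α > βqN, then x'(t) is strictly monotonically decreasing on [0, ∞). -/
open Real Filter Set

/-!
Writing `A = qN + α/β`, one has `x = qN - A/(g + 1)`, so `x' = A g'/(g + 1)² = Aτ · g/(g + 1)²`.
The map `u ↦ u/(u + 1)²` decreases on `[1, ∞)`, while `g` increases and `g ≥ α/(βqN) > 1` on `[0, ∞)`.
-/

theorem strictAntiOn_mul_div_add_one_sq {K : ℝ} (hK : 0 < K) :
    StrictAntiOn (fun u : ℝ => K * u / (u + 1) ^ 2) (Ici 1) := by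
  intro u (hu : 1 ≤ u) v (hv : 1 ≤ v) huv
  have key : 0 < (v - u) * (u * v - 1) := mul_pos (by linarith) (by nlinarith)
  rw [div_lt_div_iff₀ (by positivity) (by positivity)]
  nlinarith [mul_pos hK key]

theorem HasDerivAt.mul_sub_div_add_one {g : ℝ → ℝ} {g' t : ℝ} (a b : ℝ) (hg : HasDerivAt g g' t)
    (hg1 : g t + 1 ≠ 0) :
    HasDerivAt (fun s => (a * g s - b) / (g s + 1)) ((a + b) * g' / (g t + 1) ^ 2) t := by
  refine (((hg.const_mul a).sub_const b).div (hg.add_const 1) hg1).congr_deriv ?_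
  ring

theorem stmt_8_general (N α β q τ : ℝ) (hN : 0 < N) (hβ : 0 < β) (hq : 0 < q)
    (hτ : τ = α + β * q * N)
    (g x : ℝ → ℝ)
    (hg : ∀ t, g t = (α / (β * q * N)) * Real.exp (τ * t))
    (hx : ∀ t, x t = (q * N * g t - α / β) / (g t + 1))
    (hcase : α > β * q * N) :
    StrictAntiOn (deriv x) (Ici (0 : ℝ)) := by
  set c := α / (β * q * N)
  have hβqN : 0 < β * q * N := by positivity
  have hc : 1 < c := (one_lt_div hβqN).2 hcase
  have hτpos : 0 < τ := by rw [hτ]; linarith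
  have hA : 0 < (q * N + α / β) * τ := by
    have : 0 < α / β := div_pos (by linarith) hβ
    positivity
  have hg_eq : g = fun t => c * exp (τ * t) := funext hg
  have hg_deriv (t : ℝ) : HasDerivAt g (τ * g t) t := by
    rw [hg_eq]
    refine (((hasDerivAt_id t).const_mul τ).exp.const_mul c).congr_deriv ?_
    simp only [id_eq]
    ring
  have hg_pos (t : ℝ) : 0 < g t := by rw [hg t]; positivity
  have hderiv : deriv x = (fun u => (q * N + α / β) * τ * u / (u + 1) ^ 2) ∘ g := by
    funext t
    rw [funext hx, ((hg_deriv t).mul_sub_div_add_one _ _ (by linarith [hg_pos t])).deriv]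
    simp only [Function.comp_apply]
    ring
  have hg_mono : StrictMono g := by
    rw [hg_eq]
    exact fun s t hst => mul_lt_mul_of_pos_left (exp_lt_exp.2 (by nlinarith)) (by linarith)
  have hg_maps : MapsTo g (Ici 0) (Ici 1) := fun t (ht : 0 ≤ t) => by
    rw [mem_Ici, hg t]
    nlinarith [one_le_exp (mul_nonneg hτpos.le ht)]
  rw [hderiv]
  exact (strictAntiOn_mul_div_add_one_sq hA).comp_strictMonoOn (hg_mono.strictMonoOn _) hg_maps

theorem stmt_8 (N α β q τ : ℝ) (hN : 0 < N) (hα : 0 < α) (hβ : 0 < β) (hq : 0 < q)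
    (hτ : τ = α + β * q * N)
    (g x : ℝ → ℝ)
    (hg : ∀ t, g t = (α / (β * q * N)) * Real.exp (τ * t))
    (hx : ∀ t, x t = (q * N * g t - α / β) / (g t + 1))
    (hcase : α > β * q * N) :
    StrictAntiOn (deriv x) (Ici (0 : ℝ)) :=
  stmt_8_general N α β q τ hN hβ hq hτ g x hg hx hcase
end

section
/- If α > (2+√3)·βqN, then x'(t) is convex on [0, ∞) (i.e., x'''(t) > 0 for all t > 0). -/
open Real Set

/-!
Since `g' = τ g`, every derivative of `x = (qN g - α/β)/(g + 1)` is a rational function of `g`;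
three differentiations give `x''' = (qN + α/β) τ³ g (g² - 4g + 1)/(g + 1)⁴`. The quadratic
`u² - 4u + 1` has roots `2 ± √3`, and for `t ≥ 0` we have `g t ≥ g 0 = α/(βqN) > 2 + √3`, so
`x''' > 0` on `[0, ∞)`, and `x'` is convex there.
-/

theorem hasDerivAt_const_mul_exp_mul (A τ t : ℝ) :
    HasDerivAt (fun s => A * exp (τ * s)) (τ * (A * exp (τ * t))) t :=
  (((hasDerivAt_id' t).const_mul τ).exp.const_mul A).congr_deriv (by ring)

theorem sq_sub_four_mul_add_one_pos {u : ℝ} (hu : 2 + √3 < u) : 0 < u ^ 2 - 4 * u + 1 := by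
  have h3 : √3 ^ 2 = 3 := sq_sqrt (by norm_num)
  nlinarith [sqrt_nonneg 3]

section SelfProportional

variable {τ : ℝ} {g : ℝ → ℝ}

namespace HasDerivAt

variable {t : ℝ} (hg : HasDerivAt g (τ * g t) t) (hg1 : g t + 1 ≠ 0)
include hg hg1

theorem sub_div_add_one_of_self_mul (a b : ℝ) :
    HasDerivAt (fun s => (a * g s - b) / (g s + 1)) ((a + b) * τ * (g t / (g t + 1) ^ 2)) t := by
  refine (((hg.const_mul a).sub_const b).fun_div (hg.add_const 1) hg1).congr_deriv ?_
  field_simp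
  ring

theorem div_add_one_sq_of_self_mul (c : ℝ) :
    HasDerivAt (fun s => c * (g s / (g s + 1) ^ 2))
      (c * τ * (g t * (1 - g t) / (g t + 1) ^ 3)) t := by
  refine ((hg.fun_div ((hg.add_const 1).fun_pow 2) (pow_ne_zero 2 hg1)).const_mul c).congr_deriv ?_
  field_simp
  ring

theorem mul_one_sub_div_add_one_cube_of_self_mul (c : ℝ) :
    HasDerivAt (fun s => c * (g s * (1 - g s) / (g s + 1) ^ 3))
      (c * τ * (g t * (g t ^ 2 - 4 * g t + 1) / (g t + 1) ^ 4)) t := by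
  refine (((hg.fun_mul (hg.const_sub 1)).fun_div ((hg.add_const 1).fun_pow 3)
    (pow_ne_zero 3 hg1)).const_mul c).congr_deriv ?_
  field_simp
  ring

end HasDerivAt

variable (hg : ∀ t, HasDerivAt g (τ * g t) t) (hg1 : ∀ t, g t + 1 ≠ 0) (a b : ℝ)
include hg hg1

theorem deriv_sub_div_add_one_of_self_mul :
    deriv (fun s => (a * g s - b) / (g s + 1)) = fun t => (a + b) * τ * (g t / (g t + 1) ^ 2) :=
  funext fun t => ((hg t).sub_div_add_one_of_self_mul (hg1 t) a b).deriv

theorem deriv_deriv_sub_div_add_one_of_self_mul :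
    deriv (deriv (fun s => (a * g s - b) / (g s + 1))) =
      fun t => (a + b) * τ * τ * (g t * (1 - g t) / (g t + 1) ^ 3) := by
  rw [deriv_sub_div_add_one_of_self_mul hg hg1]
  exact funext fun t => ((hg t).div_add_one_sq_of_self_mul (hg1 t) _).deriv

theorem deriv_deriv_deriv_sub_div_add_one_of_self_mul :
    deriv (deriv (deriv (fun s => (a * g s - b) / (g s + 1)))) =
      fun t => (a + b) * τ * τ * τ * (g t * (g t ^ 2 - 4 * g t + 1) / (g t + 1) ^ 4) := by
  rw [deriv_deriv_sub_div_add_one_of_self_mul hg hg1]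
  exact funext fun t => ((hg t).mul_one_sub_div_add_one_cube_of_self_mul (hg1 t) _).deriv

theorem differentiable_deriv_sub_div_add_one_of_self_mul :
    Differentiable ℝ (deriv (fun s => (a * g s - b) / (g s + 1))) := by
  rw [deriv_sub_div_add_one_of_self_mul hg hg1]
  exact fun t => ((hg t).div_add_one_sq_of_self_mul (hg1 t) _).differentiableAt

theorem differentiable_deriv_deriv_sub_div_add_one_of_self_mul :
    Differentiable ℝ (deriv (deriv (fun s => (a * g s - b) / (g s + 1)))) := by
  rw [deriv_deriv_sub_div_add_one_of_self_mul hg hg1]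
  exact fun t => ((hg t).mul_one_sub_div_add_one_cube_of_self_mul (hg1 t) _).differentiableAt

end SelfProportional

theorem stmt_9 (N α β q τ : ℝ) (hN : 0 < N) (hα : 0 < α) (hβ : 0 < β) (hq : 0 < q)
    (hτ : τ = α + β * q * N)
    (g x : ℝ → ℝ)
    (hg : ∀ t, g t = (α / (β * q * N)) * Real.exp (τ * t))
    (hx : ∀ t, x t = (q * N * g t - α / β) / (g t + 1))
    (hcase : α > (2 + Real.sqrt 3) * (β * q * N)) :
    ConvexOn ℝ (Ici (0 : ℝ)) (deriv x) ∧
    ∀ t : ℝ, 0 < t → 0 < deriv (deriv (deriv x)) t := by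
  have hτ0 : 0 < τ := by rw [hτ]; positivity
  have hg_eq : g = fun s => α / (β * q * N) * exp (τ * s) := funext hg
  have hg_deriv : ∀ t, HasDerivAt g (τ * g t) t := by
    rw [hg_eq]; exact hasDerivAt_const_mul_exp_mul _ τ
  have hg_pos : ∀ t, 0 < g t := fun t => by rw [hg t]; positivity
  have hg1 : ∀ t, g t + 1 ≠ 0 := fun t => by linarith [hg_pos t]
  have hg_large : ∀ t, 0 ≤ t → 2 + √3 < g t := fun t ht => by
    have hA : 2 + √3 < α / (β * q * N) := by rwa [lt_div_iff₀ (by positivity)]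
    rw [hg t]
    exact hA.trans_le (le_mul_of_one_le_right (by positivity) (one_le_exp (by positivity)))
  have hx_eq : x = fun s => (q * N * g s - α / β) / (g s + 1) := funext hx
  have hx''' : ∀ t, 0 ≤ t → 0 < deriv (deriv (deriv x)) t := fun t ht => by
    rw [hx_eq, deriv_deriv_deriv_sub_div_add_one_of_self_mul hg_deriv hg1]
    have := sq_sub_four_mul_add_one_pos (hg_large t ht)
    have := hg_pos t
    positivity
  refine ⟨convexOn_of_deriv2_nonneg' (convex_Ici 0) ?_ ?_ fun t ht => (hx''' t ht).le,
    fun t ht => hx''' t ht.le⟩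
  · rw [hx_eq]
    exact (differentiable_deriv_sub_div_add_one_of_self_mul hg_deriv hg1 _ _).differentiableOn
  · rw [hx_eq]
    exact (differentiable_deriv_deriv_sub_div_add_one_of_self_mul hg_deriv hg1 _ _).differentiableOn
end

section
/- If α < (2−√3)·βqN, then with t₂ = (1/τ)·ln((2−√3)βqN/α), t' = (1/τ)·ln(βqN/α), t₁ = (1/τ)·ln((2+√3)βqN/α), we have 0 < t₂ < t' < t₁, x'''(t) > 0 on (0, t₂), x'''(t) < 0 on (t₂, t₁), x'''(t) > 0 on (t₁, ∞), x''(t) > 0 on (0, t'), and x''(t) < 0 on (t', ∞). -/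
open Real Set

/-!
With `u t = (α / (β q N)) e^{τ t}` one has `x = q N - (τ / β) / (u + 1)`, and since `u' = τ u`,
every derivative of `x` is a positive multiple of `u / (u + 1)^n` times a polynomial in `u`:
`x'' ∝ 1 - u` and `x''' ∝ u² - 4u + 1 = (u - (2 - √3)) (u - (2 + √3))`. As `u` increases
strictly, the signs change exactly when `u` passes `2 - √3`, `1` and `2 + √3`, i.e. at the times
`t₂ < t' < t₁`.
-/

theorem sqrt_three_mem_Ioo : √3 ∈ Ioo 1 2 := by
  constructor
  · rw [lt_sqrt zero_le_one]; norm_num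
  · rw [sqrt_lt' two_pos]; norm_num

theorem sq_sub_four_mul_add_one_eq (v : ℝ) :
    v ^ 2 - 4 * v + 1 = (v - (2 - √3)) * (v - (2 + √3)) := by
  ring_nf
  rw [sq_sqrt (by norm_num : (0 : ℝ) ≤ 3)]
  ring

section Derivatives

variable {u : ℝ → ℝ} {τ : ℝ}

theorem deriv_const_sub_mul_inv_add_one (hu : ∀ t, HasDerivAt u (τ * u t) t)
    (hu1 : ∀ t, u t + 1 ≠ 0) (c k : ℝ) :
    deriv (fun t => c - k * (u t + 1)⁻¹) = fun t => k * τ * u t / (u t + 1) ^ 2 := by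
  funext t
  refine (((hu t).add_const 1).inv (hu1 t) |>.const_mul k |>.const_sub c).deriv.trans ?_
  field_simp

theorem deriv_mul_div_add_one_sq (hu : ∀ t, HasDerivAt u (τ * u t) t)
    (hu1 : ∀ t, u t + 1 ≠ 0) (K : ℝ) :
    deriv (fun t => K * u t / (u t + 1) ^ 2) =
      fun t => K * τ * u t / (u t + 1) ^ 3 * (1 - u t) := by
  funext t
  refine ((((hu t).const_mul K).fun_div (((hu t).add_const 1).fun_pow 2)
    (pow_ne_zero 2 (hu1 t))).deriv).trans ?_
  have := hu1 t
  field_simp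
  ring

theorem deriv_mul_div_add_one_cube_mul_one_sub (hu : ∀ t, HasDerivAt u (τ * u t) t)
    (hu1 : ∀ t, u t + 1 ≠ 0) (K : ℝ) :
    deriv (fun t => K * u t / (u t + 1) ^ 3 * (1 - u t)) =
      fun t => K * τ * u t / (u t + 1) ^ 4 * (u t ^ 2 - 4 * u t + 1) := by
  funext t
  refine (((((hu t).const_mul K).fun_div (((hu t).add_const 1).fun_pow 3)
    (pow_ne_zero 3 (hu1 t))).fun_mul ((hu t).const_sub 1)).deriv).trans ?_
  have := hu1 t
  field_simp
  ring

theorem deriv_deriv_const_sub_mul_inv_add_one (hu : ∀ t, HasDerivAt u (τ * u t) t)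
    (hu1 : ∀ t, u t + 1 ≠ 0) (c k : ℝ) :
    deriv (deriv fun t => c - k * (u t + 1)⁻¹) =
      fun t => k * τ * τ * u t / (u t + 1) ^ 3 * (1 - u t) := by
  rw [deriv_const_sub_mul_inv_add_one hu hu1, deriv_mul_div_add_one_sq hu hu1]

theorem deriv_deriv_deriv_const_sub_mul_inv_add_one (hu : ∀ t, HasDerivAt u (τ * u t) t)
    (hu1 : ∀ t, u t + 1 ≠ 0) (c k : ℝ) :
    deriv (deriv (deriv fun t => c - k * (u t + 1)⁻¹)) =
      fun t =>
        k * τ * τ * τ * u t / (u t + 1) ^ 4 * ((u t - (2 - √3)) * (u t - (2 + √3))) := by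
  rw [deriv_deriv_const_sub_mul_inv_add_one hu hu1, deriv_mul_div_add_one_cube_mul_one_sub hu hu1]
  simp only [sq_sub_four_mul_add_one_eq]

end Derivatives

theorem hasDerivAt_mul_exp_mul (A τ t : ℝ) :
    HasDerivAt (fun t => A * exp (τ * t)) (τ * (A * exp (τ * t))) t :=
  (((hasDerivAt_id' t).const_mul τ).exp.const_mul A).congr_deriv (by ring)

noncomputable def hitTime (A τ c : ℝ) : ℝ := 1 / τ * log (c / A)

section HitTime

variable {A τ c k t : ℝ}

theorem lt_hitTime_iff (hA : 0 < A) (hτ : 0 < τ) (hc : 0 < c) :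
    t < hitTime A τ c ↔ A * exp (τ * t) < c := by
  rw [hitTime, one_div, ← div_eq_inv_mul, lt_div_iff₀' hτ, lt_log_iff_exp_lt (div_pos hc hA),
    lt_div_iff₀' hA]

theorem hitTime_lt_iff (hA : 0 < A) (hτ : 0 < τ) (hc : 0 < c) :
    hitTime A τ c < t ↔ c < A * exp (τ * t) := by
  rw [hitTime, one_div, ← div_eq_inv_mul, div_lt_iff₀' hτ, log_lt_iff_lt_exp (div_pos hc hA),
    div_lt_iff₀' hA]

theorem hitTime_pos_iff (hA : 0 < A) (hτ : 0 < τ) (hc : 0 < c) :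
    0 < hitTime A τ c ↔ A < c := by
  simpa using lt_hitTime_iff (t := 0) hA hτ hc

theorem hitTime_strictMonoOn (hA : 0 < A) (hτ : 0 < τ) : StrictMonoOn (hitTime A τ) (Ioi 0) := by
  intro c hc d _ hcd
  have : 0 < c := hc
  unfold hitTime
  gcongr

theorem deriv_deriv_pos_of_lt_hitTime (hA : 0 < A) (hτ : 0 < τ) (hk : 0 < k)
    (ht : t < hitTime A τ 1) :
    0 < deriv (deriv fun t => c - k * (A * exp (τ * t) + 1)⁻¹) t := by
  have := (lt_hitTime_iff hA hτ one_pos).1 ht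
  rw [deriv_deriv_const_sub_mul_inv_add_one (hasDerivAt_mul_exp_mul A τ) (fun _ => by positivity)]
  exact mul_pos (by positivity) (by linarith)

theorem deriv_deriv_neg_of_hitTime_lt (hA : 0 < A) (hτ : 0 < τ) (hk : 0 < k)
    (ht : hitTime A τ 1 < t) :
    deriv (deriv fun t => c - k * (A * exp (τ * t) + 1)⁻¹) t < 0 := by
  have := (hitTime_lt_iff hA hτ one_pos).1 ht
  rw [deriv_deriv_const_sub_mul_inv_add_one (hasDerivAt_mul_exp_mul A τ) (fun _ => by positivity)]
  exact mul_neg_of_pos_of_neg (by positivity) (by linarith)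

theorem deriv_deriv_deriv_pos_of_lt_hitTime (hA : 0 < A) (hτ : 0 < τ) (hk : 0 < k)
    (ht : t < hitTime A τ (2 - √3)) :
    0 < deriv (deriv (deriv fun t => c - k * (A * exp (τ * t) + 1)⁻¹)) t := by
  obtain ⟨hsqrt_gt, hsqrt_lt⟩ := sqrt_three_mem_Ioo
  have := (lt_hitTime_iff hA hτ (by linarith [hsqrt_lt])).1 ht
  rw [deriv_deriv_deriv_const_sub_mul_inv_add_one (hasDerivAt_mul_exp_mul A τ)
    (fun _ => by positivity)]
  exact mul_pos (by positivity) (mul_pos_of_neg_of_neg (by linarith) (by linarith))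

theorem deriv_deriv_deriv_neg_of_mem_Ioo (hA : 0 < A) (hτ : 0 < τ) (hk : 0 < k)
    (ht : t ∈ Ioo (hitTime A τ (2 - √3)) (hitTime A τ (2 + √3))) :
    deriv (deriv (deriv fun t => c - k * (A * exp (τ * t) + 1)⁻¹)) t < 0 := by
  obtain ⟨hsqrt_gt, hsqrt_lt⟩ := sqrt_three_mem_Ioo
  have := (hitTime_lt_iff hA hτ (by linarith [hsqrt_lt])).1 ht.1
  have := (lt_hitTime_iff hA hτ (by linarith [hsqrt_gt])).1 ht.2
  rw [deriv_deriv_deriv_const_sub_mul_inv_add_one (hasDerivAt_mul_exp_mul A τ)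
    (fun _ => by positivity)]
  exact mul_neg_of_pos_of_neg (by positivity) (mul_neg_of_pos_of_neg (by linarith) (by linarith))

theorem deriv_deriv_deriv_pos_of_hitTime_lt (hA : 0 < A) (hτ : 0 < τ) (hk : 0 < k)
    (ht : hitTime A τ (2 + √3) < t) :
    0 < deriv (deriv (deriv fun t => c - k * (A * exp (τ * t) + 1)⁻¹)) t := by
  obtain ⟨hsqrt_gt, hsqrt_lt⟩ := sqrt_three_mem_Ioo
  have := (hitTime_lt_iff hA hτ (by linarith [hsqrt_gt])).1 ht
  rw [deriv_deriv_deriv_const_sub_mul_inv_add_one (hasDerivAt_mul_exp_mul A τ)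
    (fun _ => by positivity)]
  exact mul_pos (by positivity) (mul_pos (by linarith) (by linarith))

end HitTime

theorem stmt_11 (N α β q τ : ℝ) (hN : 0 < N) (hα : 0 < α) (hβ : 0 < β) (hq : 0 < q)
    (hτ : τ = α + β * q * N)
    (g x : ℝ → ℝ)
    (hg : ∀ t, g t = (α / (β * q * N)) * Real.exp (τ * t))
    (hx : ∀ t, x t = (q * N * g t - α / β) / (g t + 1))
    (hcase : α < (2 - Real.sqrt 3) * (β * q * N))
    (t₂ t' t₁ : ℝ)
    (ht₂ : t₂ = (1 / τ) * Real.log ((2 - Real.sqrt 3) * (β * q * N) / α))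
    (ht' : t' = (1 / τ) * Real.log (β * q * N / α))
    (ht₁ : t₁ = (1 / τ) * Real.log ((2 + Real.sqrt 3) * (β * q * N) / α)) :
    0 < t₂ ∧ t₂ < t' ∧ t' < t₁ ∧
    (∀ t : ℝ, t ∈ Ioo 0 t₂ → 0 < deriv (deriv (deriv x)) t) ∧
    (∀ t : ℝ, t ∈ Ioo t₂ t₁ → deriv (deriv (deriv x)) t < 0) ∧
    (∀ t : ℝ, t₁ < t → 0 < deriv (deriv (deriv x)) t) ∧
    (∀ t : ℝ, t ∈ Ioo 0 t' → 0 < deriv (deriv x) t) ∧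
    (∀ t : ℝ, t' < t → deriv (deriv x) t < 0) := by
  have hβqN : 0 < β * q * N := by positivity
  have hτpos : 0 < τ := by rw [hτ]; positivity
  set A := α / (β * q * N) with hA_def
  have hA : 0 < A := by positivity
  have hk : 0 < τ / β := by positivity
  have hx_eq : x = fun t => q * N - τ / β * (A * exp (τ * t) + 1)⁻¹ := by
    funext t
    rw [hx, hg]
    field_simp
    rw [hτ]
    ring
  have hhitTime (c : ℝ) : 1 / τ * log (c * (β * q * N) / α) = hitTime A τ c := by
    rw [hitTime, hA_def, div_div_eq_mul_div]
  rw [hhitTime] at ht₂ ht₁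
  rw [← one_mul (β * q * N), hhitTime] at ht'
  subst ht₂ ht' ht₁ hx_eq
  obtain ⟨hsqrt_gt, hsqrt_lt⟩ := sqrt_three_mem_Ioo
  have hlo : (2 - √3 : ℝ) ∈ Ioi 0 := mem_Ioi.2 (by linarith)
  have hhi : (2 + √3 : ℝ) ∈ Ioi 0 := mem_Ioi.2 (by linarith)
  refine ⟨(hitTime_pos_iff hA hτpos hlo).2 ?_,
    hitTime_strictMonoOn hA hτpos hlo (mem_Ioi.2 one_pos) (by linarith),
    hitTime_strictMonoOn hA hτpos (mem_Ioi.2 one_pos) hhi (by linarith),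
    fun t ht => deriv_deriv_deriv_pos_of_lt_hitTime hA hτpos hk ht.2,
    fun t ht => deriv_deriv_deriv_neg_of_mem_Ioo hA hτpos hk ht,
    fun t ht => deriv_deriv_deriv_pos_of_hitTime_lt hA hτpos hk ht,
    fun t ht => deriv_deriv_pos_of_lt_hitTime hA hτpos hk ht.2,
    fun t ht => deriv_deriv_neg_of_hitTime_lt hA hτpos hk ht⟩
  rwa [hA_def, div_lt_iff₀ hβqN]
end
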